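/- arXiv:2604.23184 — 3 statements merged into one kernel-verified Lean document; each statement's English description precedes it below -/
import Mathlib

section
/- Let p > 1, k ≥ 1, 0 < q ≤ 1 and γ > 0, and let t₀ be the unique positive root of f(t) = t^p - qγ·k^(-(p-1)/p)·t - qγ·k^(-(p-1)/p) - 1. Then t₀ > (kp)^(-1/p) · (qγ)^(1/(p-1)). -/
/-! From `t₀ ^ p = c t₀ + c + 1` with `c = qγ k^(-(p-1)/p)` one gets `t₀ ^ (p - 1) > c`, while the
bound `B = (kp)^(-1/p) (qγ)^(1/(p-1))` satisfies `B ^ (p - 1) = p^(-(p-1)/p) c < c`; since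
`x ↦ x ^ (p - 1)` is strictly increasing on `[0, ∞)`, `B < t₀`. -/

namespace Real

lemma lt_rpow_sub_one_of_rpow_eq_mul_add {t c d p : ℝ} (ht : 0 < t) (hd : 0 < d)
    (h : t ^ p = c * t + d) : c < t ^ (p - 1) := by
  rw [rpow_sub_one ht.ne', h, add_div, mul_div_cancel_right₀ c ht.ne']
  exact lt_add_of_pos_right c (div_pos hd ht)

lemma rpow_neg_inv_mul_rpow_inv_sub_one_rpow_sub_one {x a p : ℝ} (hx : 0 ≤ x) (ha : 0 ≤ a)
    (hp : p ≠ 1) :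
    (x ^ (-(1 / p)) * a ^ (1 / (p - 1))) ^ (p - 1) = x ^ (-(p - 1) / p) * a := by
  rw [mul_rpow (rpow_nonneg hx _) (rpow_nonneg ha _), ← rpow_mul hx, ← rpow_mul ha,
    one_div_mul_cancel (sub_ne_zero.2 hp), rpow_one]
  ring_nf

end Real

theorem root_lower_bound_general (p k q γ t₀ : ℝ) (hp : 1 < p) (hk : 1 ≤ k)
    (hq0 : 0 < q) (hγ : 0 < γ) (ht₀ : 0 < t₀)
    (hroot : t₀ ^ p - (q * γ * k ^ (-(p - 1) / p)) * t₀ - q * γ * k ^ (-(p - 1) / p) - 1 = 0) :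
    t₀ > (k * p) ^ (-(1 / p)) * (q * γ) ^ (1 / (p - 1)) := by
  have hk0 : 0 < k := by linarith
  have hqγ : 0 < q * γ := mul_pos hq0 hγ
  set c := q * γ * k ^ (-(p - 1) / p)
  have hc : 0 < c := by positivity
  have hp_pow : p ^ (-(p - 1) / p) < 1 :=
    Real.rpow_lt_one_of_one_lt_of_neg hp (div_neg_of_neg_of_pos (by linarith) (by linarith))
  have hbound : ((k * p) ^ (-(1 / p)) * (q * γ) ^ (1 / (p - 1))) ^ (p - 1) < c := by
    rw [Real.rpow_neg_inv_mul_rpow_inv_sub_one_rpow_sub_one (by positivity) hqγ.le hp.ne',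
      Real.mul_rpow hk0.le (by linarith)]
    calc k ^ (-(p - 1) / p) * p ^ (-(p - 1) / p) * (q * γ) = p ^ (-(p - 1) / p) * c := by ring
      _ < c := mul_lt_of_lt_one_left hc hp_pow
  have hroot_pow : c < t₀ ^ (p - 1) :=
    Real.lt_rpow_sub_one_of_rpow_eq_mul_add ht₀ (by positivity : 0 < c + 1) (by linarith)
  exact (Real.rpow_lt_rpow_iff (by positivity) ht₀.le (sub_pos.2 hp)).1 (hbound.trans hroot_pow)

theorem root_lower_bound (p k q γ t₀ : ℝ) (hp : 1 < p) (hk : 1 ≤ k)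
    (hq0 : 0 < q) (hq1 : q ≤ 1) (hγ : 0 < γ) (ht₀ : 0 < t₀)
    (hroot : t₀ ^ p - (q * γ * k ^ (-(p - 1) / p)) * t₀ - q * γ * k ^ (-(p - 1) / p) - 1 = 0) :
    t₀ > (k * p) ^ (-(1 / p)) * (q * γ) ^ (1 / (p - 1)) :=
  root_lower_bound_general p k q γ t₀ hp hk hq0 hγ ht₀ hroot
end

section
/- Let x ∈ ℝⁿ be k-sparse, let h ∈ ℝⁿ, and suppose ‖x‖₁/‖x‖_p^q ≥ ‖x+h‖₁/‖x+h‖_p^q with x ≠ 0, x + h ≠ 0, p > 1, 0 < q ≤ 1, and ‖x‖₁/‖x‖_p ≤ γ. Then, denoting by h_(k) the vector of the k largest-magnitude entries of h (others zeroed) and h_(-k) = h - h_(k), one has ‖h_(-k)‖₁ ≤ (qγ + k^(1-1/p))·‖h_(k)‖_p + qγ·‖h_(-k)‖_p. -/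
/-!
The ratio hypothesis gives `‖x + h‖₁ ≤ ‖x‖₁ (‖x + h‖_p / ‖x‖_p)^q`; Minkowski's inequality and
Bernoulli's inequality `(1 + t)^q ≤ 1 + q t` bound the right-hand side by `‖x‖₁ + q γ ‖h‖_p`.
Conversely, `x` is supported on at most `k = #T` coordinates and `T` carries the `k` largest
entries of `h`, so the reverse triangle inequality gives
`‖x + h‖₁ ≥ ‖x‖₁ - ‖h_(k)‖₁ + ‖h_(-k)‖₁`. Hence `‖h_(-k)‖₁ ≤ ‖h_(k)‖₁ + q γ ‖h‖_p`, and Hölder's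
inequality `‖h_(k)‖₁ ≤ k^(1-1/p) ‖h_(k)‖_p` together with `‖h‖_p ≤ ‖h_(k)‖_p + ‖h_(-k)‖_p`
finishes the proof.
-/

open scoped Classical
open Finset

theorem Finset.sum_le_sum_of_card_le_of_largest {ι : Type*} [DecidableEq ι] {S T : Finset ι}
    {f : ι → ℝ} (hf : ∀ i ∈ T, 0 ≤ f i) (hcard : #S ≤ #T)
    (hT : ∀ i ∈ T, ∀ j ∉ T, f j ≤ f i) :
    ∑ i ∈ S, f i ≤ ∑ i ∈ T, f i := by
  have hcard' : #(S \ T) ≤ #(T \ S) := card_sdiff_le_card_sdiff_iff.2 hcard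
  have hdiff : ∑ i ∈ S \ T, f i ≤ ∑ i ∈ T \ S, f i := by
    rcases (T \ S).eq_empty_or_nonempty with hTS | hTS
    · rw [hTS, card_empty, Nat.le_zero, card_eq_zero] at hcard'
      simp [hcard', hTS]
    obtain ⟨m, hm, hmin⟩ := exists_min_image (T \ S) f hTS
    have hmT := (mem_sdiff.1 hm).1
    calc ∑ i ∈ S \ T, f i ≤ #(S \ T) • f m :=
          sum_le_card_nsmul _ _ _ fun j hj => hT m hmT j (mem_sdiff.1 hj).2
      _ ≤ #(T \ S) • f m := nsmul_le_nsmul_left (hf m hmT) hcard'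
      _ ≤ ∑ i ∈ T \ S, f i := card_nsmul_le_sum _ _ _ hmin
  rw [← sum_inter_add_sum_sdiff S T, ← sum_inter_add_sum_sdiff T S, inter_comm]
  gcongr

theorem rpow_add_le_rpow_mul_one_add {b c q : ℝ} (hb : 0 < b) (hbc : 0 ≤ b + c)
    (hq0 : 0 ≤ q) (hq1 : q ≤ 1) : (b + c) ^ q ≤ b ^ q * (1 + q * (c / b)) := by
  have hs : -1 ≤ c / b := by rw [le_div_iff₀ hb]; linarith
  calc (b + c) ^ q = b ^ q * (1 + c / b) ^ q := by
        rw [← Real.mul_rpow hb.le (by linarith), mul_one_add, mul_div_cancel₀ _ hb.ne']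
    _ ≤ b ^ q * (1 + q * (c / b)) := by
        gcongr; exact rpow_one_add_le_one_add_mul_self hs hq0 hq1

theorem sum_abs_le_card_rpow_mul {ι : Type*} {p : ℝ} (hp : 1 ≤ p) (s : Finset ι) (f : ι → ℝ) :
    ∑ i ∈ s, |f i| ≤ (#s : ℝ) ^ (1 - 1 / p) * (∑ i ∈ s, |f i| ^ p) ^ (1 / p) := by
  have hp0 : 0 < p := by linarith
  calc ∑ i ∈ s, |f i| = ((∑ i ∈ s, |f i|) ^ p) ^ (1 / p) := by
        rw [← Real.rpow_mul (by positivity), mul_one_div_cancel hp0.ne', Real.rpow_one]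
    _ ≤ ((#s : ℝ) ^ (p - 1) * ∑ i ∈ s, |f i| ^ p) ^ (1 / p) := by
        gcongr; exact Real.rpow_sum_le_const_mul_sum_rpow s f hp
    _ = (#s : ℝ) ^ (1 - 1 / p) * (∑ i ∈ s, |f i| ^ p) ^ (1 / p) := by
        rw [Real.mul_rpow (by positivity) (by positivity), ← Real.rpow_mul (by positivity)]
        congr 2
        field_simp

section

variable {ι : Type*} [Fintype ι]

theorem sum_abs_rpow_pos_of_ne_zero {x : ι → ℝ} (p : ℝ) (hx : x ≠ 0) : 0 < ∑ i, |x i| ^ p := by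
  obtain ⟨i, hi⟩ := Function.ne_iff.1 hx
  exact sum_pos' (fun j _ => by positivity) ⟨i, mem_univ i, Real.rpow_pos_of_pos (abs_pos.2 hi) p⟩

theorem sum_abs_add_le_of_ratio_le {p q : ℝ} (hp : 1 ≤ p) (hq0 : 0 ≤ q) (hq1 : q ≤ 1)
    {x h : ι → ℝ} (hx : x ≠ 0) (hxh : x + h ≠ 0)
    (hratio : (∑ i, |x i + h i|) / ((∑ i, |x i + h i| ^ p) ^ (1 / p)) ^ q
        ≤ (∑ i, |x i|) / ((∑ i, |x i| ^ p) ^ (1 / p)) ^ q) :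
    ∑ i, |x i + h i| ≤ ∑ i, |x i|
      + q * ((∑ i, |x i|) / (∑ i, |x i| ^ p) ^ (1 / p)) * (∑ i, |h i| ^ p) ^ (1 / p) := by
  set A := ∑ i, |x i|
  set B := (∑ i, |x i| ^ p) ^ (1 / p)
  set D := (∑ i, |x i + h i| ^ p) ^ (1 / p)
  set H := (∑ i, |h i| ^ p) ^ (1 / p)
  have hB : 0 < B := Real.rpow_pos_of_pos (sum_abs_rpow_pos_of_ne_zero p hx) _
  have hD : 0 < D := Real.rpow_pos_of_pos (sum_abs_rpow_pos_of_ne_zero p hxh) _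
  have hmink : D ≤ B + H := Real.Lp_add_le univ x h hp
  calc ∑ i, |x i + h i| ≤ A / B ^ q * D ^ q := (div_le_iff₀ (by positivity)).1 hratio
    _ ≤ A / B ^ q * (B + H) ^ q := by gcongr
    _ ≤ A / B ^ q * (B ^ q * (1 + q * (H / B))) := by
        gcongr; exact rpow_add_le_rpow_mul_one_add hB (by positivity) hq0 hq1
    _ = A + q * (A / B) * H := by field_simp

theorem sum_abs_add_ge_of_card_support_le {x h : ι → ℝ}
    {T : Finset ι} (hsparse : #{i | x i ≠ 0} ≤ #T) (hT : ∀ i ∈ T, ∀ j ∉ T, |h j| ≤ |h i|) :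
    ∑ i, |x i| + ∑ i, |h i| - 2 * ∑ i ∈ T, |h i| ≤ ∑ i, |x i + h i| := by
  set S : Finset ι := {i | x i ≠ 0}
  have hxS : ∀ i ∉ S, x i = 0 := by simp [S]
  have hS : ∑ i ∈ S, |h i| ≤ ∑ i ∈ T, |h i| :=
    sum_le_sum_of_card_le_of_largest (fun _ _ => abs_nonneg _) hsparse hT
  have hon : ∑ i ∈ S, (|x i| - |h i|) ≤ ∑ i ∈ S, |x i + h i| :=
    sum_le_sum fun i _ => by simpa using abs_sub_abs_le_abs_sub (x i) (-h i)
  have hoff : ∑ i ∈ Sᶜ, |h i| = ∑ i ∈ Sᶜ, |x i + h i| :=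
    sum_congr rfl fun i hi => by rw [hxS i (mem_compl.1 hi), zero_add]
  have hx : ∑ i ∈ S, |x i| = ∑ i, |x i| :=
    sum_subset (subset_univ S) fun i _ hi => by rw [hxS i hi, abs_zero]
  have hsplit_h := sum_add_sum_compl S fun i => |h i|
  have hsplit_xh := sum_add_sum_compl S fun i => |x i + h i|
  rw [sum_sub_distrib, hx] at hon
  linarith

end

theorem recovery_cone_condition_general (n k : ℕ) (p q γ : ℝ) (hp : 1 < p)
    (hq0 : 0 < q) (hq1 : q ≤ 1)
    (x h : Fin n → ℝ) (hx : x ≠ 0) (hxh : x + h ≠ 0)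
    (hsparse : (Finset.univ.filter fun i => x i ≠ 0).card ≤ k)
    (hγbd : (∑ i, |x i|) / (∑ i, |x i| ^ p) ^ (1 / p) ≤ γ)
    (T : Finset (Fin n)) (hT : T.card = k)
    (hTlargest : ∀ i ∈ T, ∀ j ∉ T, |h j| ≤ |h i|)
    (hineq : (∑ i, |x i|) / ((∑ i, |x i| ^ p) ^ (1 / p)) ^ q
        ≥ (∑ i, |x i + h i|) / ((∑ i, |x i + h i| ^ p) ^ (1 / p)) ^ q) :
    ∑ i, |(if i ∈ T then 0 else h i)|
      ≤ (q * γ + (k : ℝ) ^ (1 - 1 / p)) * (∑ i, |(if i ∈ T then h i else 0)| ^ p) ^ (1 / p)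
        + q * γ * (∑ i, |(if i ∈ T then 0 else h i)| ^ p) ^ (1 / p) := by
  set hTop : Fin n → ℝ := fun i => if i ∈ T then h i else 0
  set hRest : Fin n → ℝ := fun i => if i ∈ T then 0 else h i
  have hp0 : p ≠ 0 := by positivity
  have hTop_rpow : ∑ i ∈ T, |h i| ^ p = ∑ i, |hTop i| ^ p := by
    simp [hTop, apply_ite, Real.zero_rpow hp0]
  have hRest_abs : ∑ i ∈ T, |h i| + ∑ i, |hRest i| = ∑ i, |h i| := by
    simp [hRest, apply_ite, sum_ite, filter_not, ← compl_eq_univ_sdiff, sum_add_sum_compl]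
  have hmink : (∑ i, |h i| ^ p) ^ (1 / p)
      ≤ (∑ i, |hTop i| ^ p) ^ (1 / p) + (∑ i, |hRest i| ^ p) ^ (1 / p) := by
    have hsplit : ∀ i, hTop i + hRest i = h i := fun i => by
      by_cases hi : i ∈ T <;> simp [hTop, hRest, hi]
    simpa only [hsplit] using Real.Lp_add_le univ hTop hRest hp.le
  have hholder := sum_abs_le_card_rpow_mul hp.le T h
  rw [hT, hTop_rpow] at hholder
  have hlower := sum_abs_add_ge_of_card_support_le (hsparse.trans hT.ge) hTlargest
  have hupper := sum_abs_add_le_of_ratio_le hp.le hq0.le hq1 hx hxh hineq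
  have hγ_term : q * ((∑ i, |x i|) / (∑ i, |x i| ^ p) ^ (1 / p)) * (∑ i, |h i| ^ p) ^ (1 / p)
      ≤ q * γ * ((∑ i, |hTop i| ^ p) ^ (1 / p) + (∑ i, |hRest i| ^ p) ^ (1 / p)) := by
    have hγ0 : 0 ≤ γ := le_trans (by positivity) hγbd
    have := mul_nonneg hq0.le hγ0
    gcongr
  linarith

theorem recovery_cone_condition (n k : ℕ) (p q γ : ℝ) (hp : 1 < p)
    (hq0 : 0 < q) (hq1 : q ≤ 1) (hγ : 0 < γ)
    (x h : Fin n → ℝ) (hx : x ≠ 0) (hxh : x + h ≠ 0)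
    (hsparse : (Finset.univ.filter fun i => x i ≠ 0).card ≤ k)
    (hγbd : (∑ i, |x i|) / (∑ i, |x i| ^ p) ^ (1 / p) ≤ γ)
    (T : Finset (Fin n)) (hT : T.card = k)
    (hTlargest : ∀ i ∈ T, ∀ j ∉ T, |h j| ≤ |h i|)
    (hineq : (∑ i, |x i|) / ((∑ i, |x i| ^ p) ^ (1 / p)) ^ q
        ≥ (∑ i, |x i + h i|) / ((∑ i, |x i + h i| ^ p) ^ (1 / p)) ^ q) :
    ∑ i, |(if i ∈ T then 0 else h i)|
      ≤ (q * γ + (k : ℝ) ^ (1 - 1 / p)) * (∑ i, |(if i ∈ T then h i else 0)| ^ p) ^ (1 / p)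
        + q * γ * (∑ i, |(if i ∈ T then 0 else h i)| ^ p) ^ (1 / p) :=
  recovery_cone_condition_general n k p q γ hp hq0 hq1 x h hx hxh hsparse hγbd T hT hTlargest hineq
end

section
/- Let g : ℝⁿ → ℝ be continuously differentiable with L-Lipschitz gradient, let f : ℝ → ℝ be concave and differentiable, let h : ℝⁿ → ℝ be convex, and let Ω ⊆ ℝⁿ be closed convex. Fix β > L and x_k ∈ Ω, and define Q(x) = F(x_k) + f'(h(x_k))(h(x) − h(x_k)) + ⟨∇g(x_k), x − x_k⟩ + (β/2)‖x − x_k‖², where F(x) = f(h(x)) + g(x). If additionally f'(h(x_k)) ≥ 0, then for all x ∈ Ω: F(x) ≤ Q(x) − ((β−L)/2)‖x − x_k‖². -/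
/-!
Both summands of `f ∘ h + g` lie below a model at `xk`: the concave `f` lies below its tangent
line at `h xk`, and `g` lies below its quadratic model with curvature `L` (the descent lemma).
The descent lemma is a comparison along the segment from `xk` to `x`: by the Lipschitz bound,
the derivative of `t ↦ g (xk + t • (x - xk))` exceeds `⟪∇g xk, x - xk⟫` by at most
`L t ‖x - xk‖²`, which is the derivative of the quadratic term.
-/

open scoped RealInnerProductSpace
open Set

lemma ConcaveOn.le_add_mul_sub_of_hasDerivAt {s : Set ℝ} {f : ℝ → ℝ} {a b f'a : ℝ}
    (hf : ConcaveOn ℝ s f) (ha : a ∈ s) (hb : b ∈ s) (hfa : HasDerivAt f f'a a) :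
    f b ≤ f a + f'a * (b - a) := by
  rcases lt_trichotomy a b with hab | rfl | hab
  · have hslope := hf.slope_le_of_hasDerivAt ha hb hab hfa
    rw [slope_def_field, div_le_iff₀ (sub_pos.2 hab)] at hslope
    linarith
  · simp
  · have hslope := hf.le_slope_of_hasDerivAt hb ha hab hfa
    rw [slope_def_field, le_div_iff₀ (sub_pos.2 hab)] at hslope
    linarith

section DescentLemma

variable {E : Type*} [NormedAddCommGroup E] [InnerProductSpace ℝ E]
  {g : E → ℝ} {g' : E → E} {L : ℝ}

lemma HasGradientAt.hasDerivAt_comp_add_smul [CompleteSpace E] {x v w : E} {t : ℝ}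
    (hg : HasGradientAt g w (x + t • v)) :
    HasDerivAt (fun s : ℝ => g (x + s • v)) ⟪w, v⟫ t := by
  have hline : HasDerivAt (fun s : ℝ => x + s • v) v t := by
    simpa using ((hasDerivAt_id t).smul_const v).const_add x
  exact hg.hasFDerivAt.comp_hasDerivAt t hline

lemma inner_gradient_add_smul_le (hlip : ∀ x y, ‖g' x - g' y‖ ≤ L * ‖x - y‖)
    (x v : E) {t : ℝ} (ht : 0 ≤ t) :
    ⟪g' (x + t • v), v⟫ ≤ ⟪g' x, v⟫ + L * t * ‖v‖ ^ 2 :=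
  calc ⟪g' (x + t • v), v⟫ = ⟪g' x, v⟫ + ⟪g' (x + t • v) - g' x, v⟫ := by
        rw [inner_sub_left]; ring
    _ ≤ ⟪g' x, v⟫ + ‖g' (x + t • v) - g' x‖ * ‖v‖ := by
        gcongr; exact real_inner_le_norm _ _
    _ ≤ ⟪g' x, v⟫ + L * ‖t • v‖ * ‖v‖ := by
        gcongr; simpa using hlip (x + t • v) x
    _ = ⟪g' x, v⟫ + L * t * ‖v‖ ^ 2 := by
        rw [norm_smul, Real.norm_of_nonneg ht]; ring

theorem le_add_inner_add_sq_of_lipschitz_gradient [CompleteSpace E]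
    (hg : ∀ x, HasGradientAt g (g' x) x)
    (hlip : ∀ x y, ‖g' x - g' y‖ ≤ L * ‖x - y‖) (x y : E) :
    g y ≤ g x + ⟪g' x, y - x⟫ + L / 2 * ‖y - x‖ ^ 2 := by
  set v := y - x
  have hg_line (t : ℝ) : HasDerivAt (fun s : ℝ => g (x + s • v)) ⟪g' (x + t • v), v⟫ t :=
    (hg _).hasDerivAt_comp_add_smul
  have hmodel (t : ℝ) : HasDerivAt (fun s : ℝ => g x + s * ⟪g' x, v⟫ + L / 2 * s ^ 2 * ‖v‖ ^ 2)
      (⟪g' x, v⟫ + L * t * ‖v‖ ^ 2) t := by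
    have := (((hasDerivAt_id t).mul_const ⟪g' x, v⟫).const_add (g x)).add
      (((hasDerivAt_pow 2 t).const_mul (L / 2)).mul_const (‖v‖ ^ 2))
    exact this.congr_deriv (by ring)
  have hcompare := image_le_of_deriv_right_le_deriv_boundary (a := 0) (b := 1)
    (fun t _ => (hg_line t).continuousAt.continuousWithinAt)
    (fun t _ => (hg_line t).hasDerivWithinAt) (by simp)
    (fun t _ => (hmodel t).continuousAt.continuousWithinAt)
    (fun t _ => (hmodel t).hasDerivWithinAt)
    (fun t ht => inner_gradient_add_smul_le hlip x v ht.1) (right_mem_Icc.2 zero_le_one)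
  simpa [v] using hcompare

end DescentLemma

theorem majorization_property_general (n : ℕ)
    (g : EuclideanSpace ℝ (Fin n) → ℝ) (g' : EuclideanSpace ℝ (Fin n) → EuclideanSpace ℝ (Fin n))
    (hg : ∀ x, HasGradientAt g (g' x) x)
    (L : ℝ) (hlip : ∀ x y, ‖g' x - g' y‖ ≤ L * ‖x - y‖)
    (f f' : ℝ → ℝ) (hf : ∀ t, HasDerivAt f (f' t) t) (hconc : ConcaveOn ℝ Set.univ f)
    (h : EuclideanSpace ℝ (Fin n) → ℝ)
    (Ω : Set (EuclideanSpace ℝ (Fin n)))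
    (β : ℝ) (xk : EuclideanSpace ℝ (Fin n)) :
    ∀ x ∈ Ω,
      f (h x) + g x ≤
        ((f (h xk) + g xk) + f' (h xk) * (h x - h xk) + ⟪g' xk, x - xk⟫
            + β / 2 * ‖x - xk‖ ^ 2)
          - (β - L) / 2 * ‖x - xk‖ ^ 2 := by
  intro x _
  have hg_le := le_add_inner_add_sq_of_lipschitz_gradient hg hlip xk x
  have hf_le := hconc.le_add_mul_sub_of_hasDerivAt (mem_univ (h xk)) (mem_univ (h x)) (hf (h xk))
  linarith

theorem majorization_property (n : ℕ)
    (g : EuclideanSpace ℝ (Fin n) → ℝ) (g' : EuclideanSpace ℝ (Fin n) → EuclideanSpace ℝ (Fin n))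
    (hg : ∀ x, HasGradientAt g (g' x) x)
    (L : ℝ) (hL : 0 ≤ L) (hlip : ∀ x y, ‖g' x - g' y‖ ≤ L * ‖x - y‖)
    (f f' : ℝ → ℝ) (hf : ∀ t, HasDerivAt f (f' t) t) (hconc : ConcaveOn ℝ Set.univ f)
    (h : EuclideanSpace ℝ (Fin n) → ℝ) (hconv : ConvexOn ℝ Set.univ h)
    (Ω : Set (EuclideanSpace ℝ (Fin n))) (hΩconv : Convex ℝ Ω) (hΩcl : IsClosed Ω)
    (β : ℝ) (hβ : L < β) (xk : EuclideanSpace ℝ (Fin n)) (hxk : xk ∈ Ω)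
    (hpos : 0 ≤ f' (h xk)) :
    ∀ x ∈ Ω,
      f (h x) + g x ≤
        ((f (h xk) + g xk) + f' (h xk) * (h x - h xk) + ⟪g' xk, x - xk⟫
            + β / 2 * ‖x - xk‖ ^ 2)
          - (β - L) / 2 * ‖x - xk‖ ^ 2 :=
  majorization_property_general n g g' hg L hlip f f' hf hconc h Ω β xk
end
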